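/- arXiv:2203.00371 — 3 statements merged into one kernel-verified Lean document; each statement's English description precedes it below -/
import Mathlib

section
/- Suppose x ∈ ℝ₊^{A×H} satisfies the balance condition x_{ih} = y_i η_h for all i, h (where y_i = Σ_h x_{ih}, η_h = Σ_i x_{ih}, Σ_{i,h} x_{ih} = 1), and suppose r_i(y) = r_j(y) for all i, j in the support of y. Then f_{ih}(x) = 0 for all i ∈ A and h ∈ H, where f is the replicator equation on the community network. -/
open Finset

/-- If the system state satisfies the balance condition
`x i h = y i * η h` and all supported rewards are equal, then the replicator
equation on the community network vanishes identically. -/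
theorem balanced_equal_rewards_is_equilibrium
    {A H : Type*} [Fintype A] [Fintype H]
    (x : A → H → ℝ) (W : H → H → ℝ) (r : A → (A → ℝ) → ℝ)
    (hx : ∀ i h, 0 ≤ x i h) (hW : ∀ h k, 0 ≤ W h k)
    (hsum : ∑ i, ∑ h, x i h = 1)
    (η : H → ℝ) (hη : ∀ h, η h = ∑ i, x i h)
    (y : A → ℝ) (hy : ∀ i, y i = ∑ h, x i h)
    (hbal : ∀ i h, x i h = y i * η h)
    (hrew : ∀ i j, 0 < y i → 0 < y j → r i y = r j y)
    (f : A → H → ℝ)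
    (hf : ∀ i h, f i h =
      η h * (∑ k, x i k * W h k * r i y)
        - x i h * ∑ j, ∑ k, x j k * W h k * r j y) :
    ∀ i h, f i h = 0 := by
  have hynn : ∀ i, 0 ≤ y i := fun i => by
    rw [hy]; exact Finset.sum_nonneg fun k _ => hx i k
  intro i h
  rcases (hynn i).eq_or_lt with h0 | hpos
  · have hz : ∀ k, x i k = 0 := fun k => by rw [hbal, ← h0, zero_mul]
    simp [hf, hz]
  · have key : ∀ j k, x j k * W h k * r j y = x j k * W h k * r i y := by
      intro j k
      rcases (hynn j).eq_or_lt with h0 | hposj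
      · rw [hbal, ← h0]; ring
      · rw [hrew j i hposj hpos]
    rw [hf]
    simp only [key]
    have h1 : ∑ k, x i k * W h k * r i y = y i * ∑ k, η k * W h k * r i y := by
      rw [Finset.mul_sum]
      exact Finset.sum_congr rfl fun k _ => by rw [hbal]; ring
    have h2 : ∑ j, ∑ k, x j k * W h k * r i y = ∑ k, η k * W h k * r i y := by
      rw [Finset.sum_comm]
      refine Finset.sum_congr rfl fun k _ => ?_
      rw [hη, Finset.sum_mul, Finset.sum_mul]
    rw [h1, h2, hbal]
    ring
end

section
/- Suppose for all i ∈ A, Σ_{h ∈ H} f_{ih}(x) = 0 (population state is at equilibrium), all supported rewards are equal (r_i(y) = r_j(y) = ρ > 0 for i,j ∈ supp(y)), W is nonnegative irreducible, and η_h > 0 for all h. Then f_{ih}(x) = 0 for all i, h implies and is implied by the balance condition x_{ih} = y_i η_h for all i ∈ A, h ∈ H. -/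
open Finset

/-- Strong connectivity of the positive-entry graph of a matrix. -/
def StrongConn {H : Type*} [Fintype H] (W : H → H → ℝ) : Prop :=
  ∀ i j : H, Relation.ReflTransGen (fun a b => 0 < W a b) i j

/-- At a population-state equilibrium with equal positive
rewards on the support, an irreducible nonnegative interaction matrix and
positive community densities, the replicator vector field vanishes
identically if and only if the balance condition `x i h = y i η h` holds. -/
theorem equilibrium_iff_balance {A H : Type*} [Fintype A] [Fintype H]
    (x : A → H → ℝ) (W : H → H → ℝ) (r : A → (A → ℝ) → ℝ) (ρ : ℝ)
    (hx : ∀ i h, 0 ≤ x i h) (hW : ∀ h k, 0 ≤ W h k) (hWirr : StrongConn W)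
    (hsum : ∑ i, ∑ h, x i h = 1)
    (η : H → ℝ) (hη : ∀ h, η h = ∑ i, x i h) (hηpos : ∀ h, 0 < η h)
    (y : A → ℝ) (hy : ∀ i, y i = ∑ h, x i h)
    (hρ : 0 < ρ) (hrew : ∀ i, 0 < y i → r i y = ρ)
    (f : A → H → ℝ)
    (hf : ∀ i h, f i h =
      η h * (∑ k, x i k * W h k * r i y)
        - x i h * ∑ j, ∑ k, x j k * W h k * r j y)
    (heq : ∀ i, ∑ h, f i h = 0) :
    (∀ i h, f i h = 0) ↔ (∀ i h, x i h = y i * η h) := by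
  classical
  -- rewards on the support equal ρ
  have hr : ∀ i k, x i k * r i y = x i k * ρ := by
    intro i k
    rcases eq_or_lt_of_le (hx i k) with h0 | h0
    · rw [← h0]; ring
    · have hyi : 0 < y i := by
        rw [hy]
        exact lt_of_lt_of_le h0 (Finset.single_le_sum (fun h _ => hx i h) (mem_univ k))
      rw [hrew i hyi]
  -- total mass of η
  have hηtot : ∑ h, η h = 1 := by
    simp_rw [hη]
    rw [Finset.sum_comm]
    exact hsum
  -- simplified form of f
  have hf' : ∀ i h, f i h
      = ρ * (η h * ∑ k, W h k * x i k - x i h * ∑ k, W h k * η k) := by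
    intro i h
    rw [hf]
    have e1 : ∑ k, x i k * W h k * r i y = ρ * ∑ k, W h k * x i k := by
      rw [Finset.mul_sum]
      refine Finset.sum_congr rfl fun k _ => ?_
      calc x i k * W h k * r i y = (x i k * r i y) * W h k := by ring
        _ = (x i k * ρ) * W h k := by rw [hr i k]
        _ = ρ * (W h k * x i k) := by ring
    have e2 : ∑ j, ∑ k, x j k * W h k * r j y = ρ * ∑ k, W h k * η k := by
      have e3 : ∀ j, ∑ k, x j k * W h k * r j y = ∑ k, ρ * (W h k * x j k) := by
        intro j
        refine Finset.sum_congr rfl fun k _ => ?_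
        calc x j k * W h k * r j y = (x j k * r j y) * W h k := by ring
          _ = (x j k * ρ) * W h k := by rw [hr j k]
          _ = ρ * (W h k * x j k) := by ring
      simp_rw [e3]
      rw [Finset.sum_comm, Finset.mul_sum]
      refine Finset.sum_congr rfl fun k _ => ?_
      rw [hη k, Finset.mul_sum, Finset.mul_sum]
    rw [e1, e2]; ring
  constructor
  · intro hf0 i h
    set α : H → ℝ := fun k => x i k / η k with hα
    have hxα : ∀ k, x i k = α k * η k := fun k => (div_mul_cancel₀ _ (hηpos k).ne').symm
    have hbal : ∀ a, ∑ k, W a k * η k * α k = α a * ∑ k, W a k * η k := by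
      intro a
      have h0 := hf0 i a
      rw [hf' i a] at h0
      have h1 : η a * ∑ k, W a k * x i k = x i a * ∑ k, W a k * η k := by
        rcases mul_eq_zero.mp h0 with h2 | h2
        · exact absurd h2 hρ.ne'
        · linarith
      have h2 : ∑ k, W a k * x i k = ∑ k, W a k * η k * α k := by
        refine Finset.sum_congr rfl fun k _ => ?_
        rw [hxα k]; ring
      rw [h2, hxα a] at h1
      have h4 : η a * (∑ k, W a k * η k * α k) = η a * (α a * ∑ k, W a k * η k) := by
        linear_combination h1
      exact mul_left_cancel₀ (hηpos a).ne' h4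
    obtain ⟨h0, -, hmax⟩ :=
      Finset.exists_max_image (univ : Finset H) α ⟨h, mem_univ h⟩
    set m := α h0 with hm0
    have key : ∀ a, α a = m → ∀ b, 0 < W a b → α b = m := by
      intro a ha b hab
      have hsum0 : ∑ k, W a k * η k * (m - α k) = 0 := by
        have hba := hbal a
        rw [ha] at hba
        calc ∑ k, W a k * η k * (m - α k)
            = m * (∑ k, W a k * η k) - ∑ k, W a k * η k * α k := by
              rw [Finset.mul_sum, ← Finset.sum_sub_distrib]
              exact Finset.sum_congr rfl fun k _ => by ring
          _ = 0 := by rw [hba]; ring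
      have hnn : ∀ k ∈ (univ : Finset H), 0 ≤ W a k * η k * (m - α k) := by
        intro k _
        have : α k ≤ m := hmax k (mem_univ k)
        exact mul_nonneg (mul_nonneg (hW a k) (hηpos k).le) (by linarith)
      have hterm := (Finset.sum_eq_zero_iff_of_nonneg hnn).mp hsum0 b (mem_univ b)
      have hpos : 0 < W a b * η b := mul_pos hab (hηpos b)
      rcases mul_eq_zero.mp hterm with h2 | h2
      · exact absurd h2 hpos.ne'
      · linarith
    have hconst : ∀ j, α j = m := by
      intro j
      have hpath := hWirr h0 j
      induction hpath with
      | refl => rfl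
      | tail hab hbc ih => exact key _ ih _ hbc
    have hmy : m = y i := by
      have h2 : ∑ k, x i k = m * ∑ k, η k := by
        rw [Finset.mul_sum]
        refine Finset.sum_congr rfl fun k _ => ?_
        rw [hxα k, hconst k]
      rw [hy i, h2, hηtot, mul_one]
    rw [hxα h, hconst h, hmy]
  · intro hb i h
    rw [hf' i h]
    have e : ∑ k, W h k * x i k = y i * ∑ k, W h k * η k := by
      rw [Finset.mul_sum]
      refine Finset.sum_congr rfl fun k _ => ?_
      rw [hb i k]; ring
    rw [e, hb i h]; ring
end

section
/- Let W be nonnegative and irreducible, η ∈ ℝ^H strictly positive, and suppose α ∈ ℝ₊^H satisfies Σ_k W_{hk} η_k (α_k − α_h) = 0 for all h ∈ H. Then α is constant: α_h = α_k for all h, k. -/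
open Finset

/-- On a strongly connected nonnegative weighted graph with
positive weights `η`, the only nonnegative solutions of the weighted
Laplacian balance equations `∑ k, W h k * η k * (α k − α h) = 0` are the
constant vectors. -/
theorem weighted_laplacian_kernel_constant {H : Type*} [Fintype H]
    (W : H → H → ℝ) (η α : H → ℝ)
    (hW : ∀ h k, 0 ≤ W h k) (hWirr : StrongConn W)
    (hη : ∀ h, 0 < η h) (hα : ∀ h, 0 ≤ α h)
    (hbal : ∀ h, ∑ k, W h k * η k * (α k - α h) = 0) :
    ∀ h k, α h = α k := by
  cases isEmpty_or_nonempty H with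
  | inl he => intro h; exact (IsEmpty.false h).elim
  | inr hne =>
    obtain ⟨a₀, ha₀⟩ := Finite.exists_max α
    -- step: from a max point, neighbors are also max
    have step : ∀ a, α a = α a₀ → ∀ b, 0 < W a b → α b = α a₀ := by
      intro a ha b hab
      have hnonpos : ∀ k ∈ Finset.univ, W a k * η k * (α k - α a) ≤ 0 := by
        intro k _
        have : α k - α a ≤ 0 := by
          have := ha₀ k; rw [ha]; linarith
        exact mul_nonpos_of_nonneg_of_nonpos (mul_nonneg (hW a k) (hη k).le) this
      have hzero := (Finset.sum_eq_zero_iff_of_nonpos hnonpos).mp (hbal a) b (Finset.mem_univ b)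
      have hpos : 0 < W a b * η b := mul_pos hab (hη b)
      have : α b - α a = 0 := by
        by_contra hne'
        exact hne' (by
          have := mul_eq_zero.mp hzero
          rcases this with h1 | h1
          · exact absurd h1 (ne_of_gt hpos)
          · exact h1)
      rw [← ha]; linarith
    -- propagate along reflexive-transitive closure
    have all_max : ∀ h, α h = α a₀ := by
      intro h
      have := hWirr a₀ h
      induction this with
      | refl => rfl
      | tail _ hedge ih => exact step _ ih _ hedge
    intro h k; rw [all_max h, all_max k]
end
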